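/- Let O_sk be a binary operation taking skeletons on games A and B to a skeleton on a game D, and define an operation O on strategies by O(σ, τ) = O_sk(φ, ψ)•, where φ is any skeleton of σ and ψ any skeleton of τ. Then O is well-defined (independent of the choice of skeletons) and monotone with respect to subset inclusion of strategies if and only if O_sk is monotone with respect to the preorder ⊑ on skeletons (φ ⊑ φ' and ψ ⊑ ψ' imply O_sk(φ, ψ) ⊑ O_sk(φ', ψ')). -/

import Mathlib

/- Justified AJM games, after Abramsky's game semantics for access control. -/

namespace AJM

inductive Pol where
  | P
  | O
deriving DecidableEq

inductive QA where
  | Q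
  | Ans
deriving DecidableEq

def Pol.flip : Pol → Pol
  | .P => .O
  | .O => .P

/-- Well-bracketed strings over moves (condition (p4)). -/
inductive WB {M : Type} (lab : M → Pol × QA) (just : M → Option M) : List M → Prop
  | nil : WB lab just []
  | wrap (a q : M) (u : List M) : (lab a).2 = QA.Ans → just a = some q →
      WB lab just u → WB lab just (q :: (u ++ [a]))
  | append (u v : List M) : WB lab just u → WB lab just v → WB lab just (u ++ v)

/-- Conditions (p1)–(p5): Opponent starts, alternation, linearity,
well-bracketing, justifiers occur before their moves. -/
def ValidSeq {M : Type} (lab : M → Pol × QA) (just : M → Option M) (s : List M) : Prop :=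
  (∀ m, s.head? = some m → (lab m).1 = Pol.O) ∧
  List.Chain' (fun m m' => (lab m).1 ≠ (lab m').1) s ∧
  s.Nodup ∧
  (∃ t, s <+: t ∧ WB lab just t) ∧
  (∀ s₁ m s₂, s = s₁ ++ m :: s₂ → ∀ m', just m = some m' → m' ∈ s₁)

/-- A justified AJM game (the data). -/
structure Game where
  M : Type
  lab : M → Pol × QA
  just : M → Option M
  pos : Set (List M)
  equiv : List M → List M → Prop

namespace Game

/-- The axioms making the data of a `Game` an actual justified AJM game. -/
structure Valid (A : Game) : Prop where
  just_wf : WellFounded fun m m' : A.M => A.just m' = some m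
  just_pol : ∀ m m', A.just m = some m' → (A.lab m).1 ≠ (A.lab m').1
  just_qa : ∀ m m', A.just m = some m' → (A.lab m).2 = QA.Ans → (A.lab m').2 = QA.Q
  ans_justified : ∀ m, (A.lab m).2 = QA.Ans → A.just m ≠ none
  pos_nonempty : A.pos.Nonempty
  pos_prefix_closed : ∀ s t : List A.M, s <+: t → t ∈ A.pos → s ∈ A.pos
  pos_valid : ∀ s ∈ A.pos, ValidSeq A.lab A.just s
  equiv_mem : ∀ s t, A.equiv s t → s ∈ A.pos ∧ t ∈ A.pos
  equiv_refl : ∀ s ∈ A.pos, A.equiv s s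
  equiv_symm : ∀ s t, A.equiv s t → A.equiv t s
  equiv_trans : ∀ s t u, A.equiv s t → A.equiv t u → A.equiv s u
  equiv_lab : ∀ s t, A.equiv s t → s.map A.lab = t.map A.lab
  equiv_prefix : ∀ s t s' t', A.equiv s t → s' <+: s → t' <+: t →
      s'.length = t'.length → A.equiv s' t'
  equiv_ext : ∀ s t a, A.equiv s t → s ++ [a] ∈ A.pos → ∃ b, A.equiv (s ++ [a]) (t ++ [b])

/-- A strategy on a game: a non-empty set of even-length positions that is
causally consistent, representation independent and deterministic. -/
structure IsStrategy (A : Game) (σ : Set (List A.M)) : Prop where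
  subset_pos : σ ⊆ A.pos
  even_length : ∀ s ∈ σ, Even s.length
  nonempty : σ.Nonempty
  causal : ∀ s a b, s ++ [a, b] ∈ σ → s ∈ σ
  repind : ∀ s t, s ∈ σ → A.equiv s t → t ∈ σ
  det : ∀ s t a b a' b', s ++ [a, b] ∈ σ → t ++ [a', b'] ∈ σ →
      A.equiv (s ++ [a]) (t ++ [a']) → A.equiv (s ++ [a, b]) (t ++ [a', b'])

/-- A skeleton of a strategy `σ`: a non-empty, causally consistent subset of
`σ` satisfying Uniformization. -/
structure IsSkeletonOf (A : Game) (φ σ : Set (List A.M)) : Prop where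
  nonempty : φ.Nonempty
  subset : φ ⊆ σ
  causal : ∀ s a b, s ++ [a, b] ∈ φ → s ∈ φ
  uniformization : ∀ s a b, s ++ [a, b] ∈ σ → s ∈ φ → ∃! b', s ++ [a, b'] ∈ φ

/-- A skeleton in the abstract sense (independently of any strategy):
a non-empty, causally consistent set of even-length positions satisfying
Functional Determinacy and Functional Representation Independence. -/
structure IsSkeleton (A : Game) (φ : Set (List A.M)) : Prop where
  subset_pos : φ ⊆ A.pos
  even_length : ∀ s ∈ φ, Even s.length
  nonempty : φ.Nonempty
  causal : ∀ s a b, s ++ [a, b] ∈ φ → s ∈ φ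
  funDet : ∀ s a b c, s ++ [a, b] ∈ φ → s ++ [a, c] ∈ φ → b = c
  funRepInd : ∀ s t a b a', s ++ [a, b] ∈ φ → t ∈ φ →
      A.equiv (s ++ [a]) (t ++ [a']) →
      ∃! b', t ++ [a', b'] ∈ φ ∧ A.equiv (s ++ [a, b]) (t ++ [a', b'])

/-- `φ• = { t | ∃ s ∈ φ, s ≈_A t }`, the saturation of `φ` under `≈_A`. -/
def dot (A : Game) (φ : Set (List A.M)) : Set (List A.M) :=
  {t | ∃ s ∈ φ, A.equiv s t}

/-- The preorder `φ ⊑ ψ` on skeletons. -/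
def Subeq (A : Game) (φ ψ : Set (List A.M)) : Prop :=
  ∀ s a b s' a', s ++ [a, b] ∈ φ → s' ∈ ψ → A.equiv (s ++ [a]) (s' ++ [a']) →
    ∃ b', s' ++ [a', b'] ∈ ψ ∧ A.equiv (s ++ [a, b]) (s' ++ [a', b'])

end Game

end AJM

/-!
An abstract skeleton `φ` is a skeleton of the strategy `φ•` it generates, and `φ ⊑ ψ` holds
exactly when `φ ⊆ ψ•`, i.e. when `φ• ⊆ ψ•`. Conversely, a skeleton `φ` of a strategy `σ` is an
abstract skeleton that answers every move of `σ` (`σ ⊑ φ`), so `σ ⊆ σ'` forces `φ ⊑ φ'` for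
skeletons `φ'` of `σ'`. Hence monotonicity of `O` under `⊆` and of `O_sk` under `⊑` are
equivalent, and well-definedness is monotonicity at `σ = σ'`, `τ = τ'` used in both directions.
-/

theorem List.exists_eq_append_pair {α : Type*} {l : List α} {n : ℕ} (h : l.length = n + 2) :
    ∃ l₀ a b, l = l₀ ++ [a, b] ∧ l₀.length = n := by
  obtain ⟨a, b, hab⟩ := List.length_eq_two.mp (by simp [h] : (l.drop n).length = 2)
  exact ⟨l.take n, a, b, by rw [← hab, List.take_append_drop], by simp [h]⟩

theorem List.induction_on_even_length {α : Type*} {P : List α → Prop} (nil : P [])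
    (append_pair : ∀ s a b, P s → P (s ++ [a, b])) (s : List α) (hs : Even s.length) : P s := by
  obtain ⟨n, hn⟩ := hs
  induction n generalizing s with
  | zero => rwa [List.length_eq_zero_iff.mp hn]
  | succ n ih =>
    obtain ⟨s₀, a, b, rfl, hs₀⟩ := List.exists_eq_append_pair (l := s) (n := n + n) (by omega)
    exact append_pair s₀ a b (ih s₀ hs₀)

namespace AJM.Game

variable {A : Game} {φ ψ σ σ' : Set (List A.M)}

namespace Valid

variable (hA : A.Valid)
include hA

theorem length_eq_of_equiv {s t : List A.M} (h : A.equiv s t) : s.length = t.length := by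
  simpa using congrArg List.length (hA.equiv_lab s t h)

theorem nil_mem_pos : [] ∈ A.pos := by
  obtain ⟨s, hs⟩ := hA.pos_nonempty
  exact hA.pos_prefix_closed [] s List.nil_prefix hs

theorem exists_eq_append_pair_of_equiv {u s : List A.M} {a b : A.M}
    (h : A.equiv u (s ++ [a, b])) :
    ∃ u₀ c d, u = u₀ ++ [c, d] ∧ A.equiv u₀ s ∧ A.equiv (u₀ ++ [c]) (s ++ [a]) := by
  obtain ⟨u₀, c, d, rfl, hlen⟩ :=
    List.exists_eq_append_pair (by simpa using hA.length_eq_of_equiv h)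
  refine ⟨u₀, c, d, rfl, ?_, ?_⟩
  · exact hA.equiv_prefix _ _ _ _ h (List.prefix_append _ _) (List.prefix_append _ _) hlen
  · exact hA.equiv_prefix _ _ _ _ h ⟨[d], by simp⟩ ⟨[b], by simp⟩ (by simp [hlen])

theorem subset_dot (hφ : φ ⊆ A.pos) : φ ⊆ dot A φ :=
  fun s hs => ⟨s, hs, hA.equiv_refl s (hφ hs)⟩

theorem dot_subset_dot_iff (hφ : φ ⊆ A.pos) : dot A φ ⊆ dot A ψ ↔ φ ⊆ dot A ψ := by
  refine ⟨(hA.subset_dot hφ).trans, fun h t ⟨s, hs, hst⟩ => ?_⟩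
  obtain ⟨u, hu, hus⟩ := h hs
  exact ⟨u, hu, hA.equiv_trans _ _ _ hus hst⟩

end Valid

theorem IsSkeleton.nil_mem (hφ : IsSkeleton A φ) : [] ∈ φ := by
  obtain ⟨s, hs⟩ := hφ.nonempty
  exact List.induction_on_even_length (P := fun s => s ∈ φ → [] ∈ φ) id
    (fun s a b ih hs => ih (hφ.causal s a b hs)) s (hφ.even_length s hs) hs

theorem IsSkeleton.subset_dot_of_subeq (hA : A.Valid) (hφ : IsSkeleton A φ) (hψ : [] ∈ ψ)
    (h : Subeq A φ ψ) : φ ⊆ dot A ψ := by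
  intro s hs
  refine List.induction_on_even_length (P := fun s => s ∈ φ → s ∈ dot A ψ)
    (fun _ => ⟨[], hψ, hA.equiv_refl [] hA.nil_mem_pos⟩) ?_ s (hφ.even_length s hs) hs
  rintro s a b ih hsab
  obtain ⟨v, hv, hsv⟩ := ih (hφ.causal s a b hsab)
  have hsa : s ++ [a] ∈ A.pos := hA.pos_prefix_closed _ _ ⟨[b], by simp⟩ (hφ.subset_pos hsab)
  obtain ⟨a', ha'⟩ := hA.equiv_ext s v a (hA.equiv_symm _ _ hsv) hsa
  obtain ⟨b', hb', hsab'⟩ := h s a b v a' hsab hv ha'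
  exact ⟨v ++ [a', b'], hb', hA.equiv_symm _ _ hsab'⟩

theorem IsSkeleton.subeq_of_subset_dot (hA : A.Valid) (hψ : IsSkeleton A ψ)
    (h : φ ⊆ dot A ψ) : Subeq A φ ψ := by
  intro s a b s' a' hsab hs' hsa
  obtain ⟨u, hu, hequ⟩ := h hsab
  obtain ⟨u₀, c, d, rfl, -, huc⟩ := hA.exists_eq_append_pair_of_equiv hequ
  obtain ⟨b', ⟨hb', hudb'⟩, -⟩ :=
    hψ.funRepInd u₀ s' c d a' hu hs' (hA.equiv_trans _ _ _ huc hsa)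
  exact ⟨b', hb', hA.equiv_trans _ _ _ (hA.equiv_symm _ _ hequ) hudb'⟩

theorem subeq_iff_dot_subset (hA : A.Valid) (hφ : IsSkeleton A φ) (hψ : IsSkeleton A ψ) :
    Subeq A φ ψ ↔ dot A φ ⊆ dot A ψ := by
  rw [hA.dot_subset_dot_iff hφ.subset_pos]
  exact ⟨hφ.subset_dot_of_subeq hA hψ.nil_mem, hψ.subeq_of_subset_dot hA⟩

theorem IsSkeleton.isStrategy_dot (hA : A.Valid) (hφ : IsSkeleton A φ) :
    IsStrategy A (dot A φ) where
  subset_pos := fun _ ⟨s, _, hst⟩ => (hA.equiv_mem s _ hst).2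
  even_length := fun _ ⟨s, hs, hst⟩ => hA.length_eq_of_equiv hst ▸ hφ.even_length s hs
  nonempty := hφ.nonempty.mono (hA.subset_dot hφ.subset_pos)
  causal := by
    rintro t a b ⟨u, hu, hequ⟩
    obtain ⟨u₀, c, d, rfl, hu₀, -⟩ := hA.exists_eq_append_pair_of_equiv hequ
    exact ⟨u₀, hφ.causal u₀ c d hu, hu₀⟩
  repind := fun _ _ ⟨s, hs, hst⟩ htt' => ⟨s, hs, hA.equiv_trans _ _ _ hst htt'⟩
  det := by
    rintro s t a b a' b' ⟨u, hu, hequ⟩ ⟨v, hv, heqv⟩ hsa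
    obtain ⟨u₀, c, d, rfl, -, huc⟩ := hA.exists_eq_append_pair_of_equiv hequ
    obtain ⟨v₀, c', d', rfl, -, hvc⟩ := hA.exists_eq_append_pair_of_equiv heqv
    have hcc' : A.equiv (u₀ ++ [c]) (v₀ ++ [c']) :=
      hA.equiv_trans _ _ _ (hA.equiv_trans _ _ _ huc hsa) (hA.equiv_symm _ _ hvc)
    obtain ⟨d'', ⟨hd'', hud''⟩, -⟩ := hφ.funRepInd u₀ v₀ c d c' hu (hφ.causal _ _ _ hv) hcc'
    obtain rfl : d'' = d' := hφ.funDet v₀ c' d'' d' hd'' hv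
    exact hA.equiv_trans _ _ _ (hA.equiv_symm _ _ hequ) (hA.equiv_trans _ _ _ hud'' heqv)

theorem IsSkeleton.isSkeletonOf_dot (hA : A.Valid) (hφ : IsSkeleton A φ) :
    IsSkeletonOf A φ (dot A φ) where
  nonempty := hφ.nonempty
  subset := hA.subset_dot hφ.subset_pos
  causal := hφ.causal
  uniformization := by
    intro s a b hsab hs
    have hsa : s ++ [a] ∈ A.pos :=
      hA.pos_prefix_closed _ _ ⟨[b], by simp⟩ ((hφ.isStrategy_dot hA).subset_pos hsab)
    obtain ⟨b', hb', -⟩ := hφ.subeq_of_subset_dot hA subset_rfl s a b s a hsab hs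
      (hA.equiv_refl _ hsa)
    exact ⟨b', hb', fun c hc => hφ.funDet s a c b' hc hb'⟩

theorem IsSkeletonOf.subeq (hA : A.Valid) (hσ : IsStrategy A σ) (hφ : IsSkeletonOf A φ σ) :
    Subeq A σ φ := by
  intro s a b s' a' hsab hs' hsa
  obtain ⟨b'', hb''⟩ :=
    hA.equiv_ext (s ++ [a]) (s' ++ [a']) b hsa (by simpa using hσ.subset_pos hsab)
  have hs'ab'' : s' ++ [a', b''] ∈ σ := by simpa using hσ.repind _ _ (by simpa using hsab) hb''
  obtain ⟨b', hb', -⟩ := hφ.uniformization s' a' b'' hs'ab'' hs'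
  exact ⟨b', hb', hσ.det s s' a b a' b' hsab (hφ.subset hb') hsa⟩

theorem IsSkeletonOf.isSkeleton (hA : A.Valid) (hσ : IsStrategy A σ)
    (hφ : IsSkeletonOf A φ σ) : IsSkeleton A φ where
  subset_pos := hφ.subset.trans hσ.subset_pos
  even_length := fun s hs => hσ.even_length s (hφ.subset hs)
  nonempty := hφ.nonempty
  causal := hφ.causal
  funDet := by
    intro s a b c hb hc
    obtain ⟨_, -, huniq⟩ := hφ.uniformization s a b (hφ.subset hb) (hφ.causal s a b hb)
    exact (huniq b hb).trans (huniq c hc).symm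
  funRepInd := by
    intro s t a b a' hsab ht hsa
    obtain ⟨b', hb', hsab'⟩ := hφ.subeq hA hσ s a b t a' (hφ.subset hsab) ht hsa
    obtain ⟨_, -, huniq⟩ := hφ.uniformization t a' b' (hφ.subset hb') ht
    exact ⟨b', ⟨hb', hsab'⟩, fun c ⟨hc, _⟩ => (huniq c hc).trans (huniq b' hb').symm⟩

theorem IsSkeletonOf.subeq_of_subset (hA : A.Valid) (hσ' : IsStrategy A σ')
    (hφ : IsSkeletonOf A φ σ) (hψ : IsSkeletonOf A ψ σ') (h : σ ⊆ σ') : Subeq A φ ψ :=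
  fun s a b s' a' hsab => hψ.subeq hA hσ' s a b s' a' (h (hφ.subset hsab))

end AJM.Game

open AJM Game in
/-- Let `Osk` be a binary operation taking skeletons on `A` and `B` to a
skeleton on `D`, and let `O(σ, τ) = Osk(φ, ψ)•` for any skeletons `φ` of `σ`
and `ψ` of `τ`. Then `O` is well-defined (independent of the choice of
skeletons) and monotone with respect to subset inclusion of strategies iff
`Osk` is monotone with respect to the preorder `⊑` on skeletons. -/
theorem operation_welldefined_monotone_iff (A B D : Game)
    (hA : A.Valid) (hB : B.Valid) (hD : D.Valid)
    (Osk : Set (List A.M) → Set (List B.M) → Set (List D.M))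
    (hOsk : ∀ φ ψ, IsSkeleton A φ → IsSkeleton B ψ → IsSkeleton D (Osk φ ψ)) :
    ((∀ σ τ φ φ' ψ ψ', IsStrategy A σ → IsStrategy B τ →
        IsSkeletonOf A φ σ → IsSkeletonOf A φ' σ →
        IsSkeletonOf B ψ τ → IsSkeletonOf B ψ' τ →
          dot D (Osk φ ψ) = dot D (Osk φ' ψ')) ∧
     (∀ σ σ' τ τ' φ φ' ψ ψ', IsStrategy A σ → IsStrategy A σ' →
        IsStrategy B τ → IsStrategy B τ' → σ ⊆ σ' → τ ⊆ τ' →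
        IsSkeletonOf A φ σ → IsSkeletonOf A φ' σ' →
        IsSkeletonOf B ψ τ → IsSkeletonOf B ψ' τ' →
          dot D (Osk φ ψ) ⊆ dot D (Osk φ' ψ'))) ↔
    (∀ φ φ' ψ ψ', IsSkeleton A φ → IsSkeleton A φ' →
        IsSkeleton B ψ → IsSkeleton B ψ' →
        Subeq A φ φ' → Subeq B ψ ψ' → Subeq D (Osk φ ψ) (Osk φ' ψ')) := by
  constructor
  · rintro ⟨-, hmono⟩ φ φ' ψ ψ' hφ hφ' hψ hψ' hφφ' hψψ'
    rw [subeq_iff_dot_subset hD (hOsk φ ψ hφ hψ) (hOsk φ' ψ' hφ' hψ')]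
    exact hmono _ _ _ _ φ φ' ψ ψ' (hφ.isStrategy_dot hA) (hφ'.isStrategy_dot hA)
      (hψ.isStrategy_dot hB) (hψ'.isStrategy_dot hB)
      ((subeq_iff_dot_subset hA hφ hφ').mp hφφ') ((subeq_iff_dot_subset hB hψ hψ').mp hψψ')
      (hφ.isSkeletonOf_dot hA) (hφ'.isSkeletonOf_dot hA)
      (hψ.isSkeletonOf_dot hB) (hψ'.isSkeletonOf_dot hB)
  · intro h
    have hmono : ∀ σ σ' τ τ' φ φ' ψ ψ', IsStrategy A σ → IsStrategy A σ' →
        IsStrategy B τ → IsStrategy B τ' → σ ⊆ σ' → τ ⊆ τ' →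
        IsSkeletonOf A φ σ → IsSkeletonOf A φ' σ' →
        IsSkeletonOf B ψ τ → IsSkeletonOf B ψ' τ' →
          dot D (Osk φ ψ) ⊆ dot D (Osk φ' ψ') := by
      intro σ σ' τ τ' φ φ' ψ ψ' hσ hσ' hτ hτ' hσσ' hττ' hφ hφ' hψ hψ'
      have hφs := hφ.isSkeleton hA hσ
      have hφ's := hφ'.isSkeleton hA hσ'
      have hψs := hψ.isSkeleton hB hτ
      have hψ's := hψ'.isSkeleton hB hτ'
      refine (subeq_iff_dot_subset hD (hOsk φ ψ hφs hψs) (hOsk φ' ψ' hφ's hψ's)).mp ?_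
      exact h φ φ' ψ ψ' hφs hφ's hψs hψ's (hφ.subeq_of_subset hA hσ' hφ' hσσ')
        (hψ.subeq_of_subset hB hτ' hψ' hττ')
    refine ⟨fun σ τ φ φ' ψ ψ' hσ hτ hφ hφ' hψ hψ' => ?_, hmono⟩
    exact (hmono σ σ τ τ φ φ' ψ ψ' hσ hσ hτ hτ subset_rfl subset_rfl hφ hφ' hψ hψ').antisymm
      (hmono σ σ τ τ φ' φ ψ' ψ hσ hσ hτ hτ subset_rfl subset_rfl hφ' hφ hψ' hψ)
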